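/- Let A, B be finite-dimensional complex Hilbert spaces, let U : A⊗B → A⊗B be unitary, let Λ : A⊗B → A⊗B be Hermitian, let ψ ∈ A⊗B be a unit vector, and suppose U ψ = ψA ⊗ ψB for unit vectors ψA ∈ A, ψB ∈ B. For a positive operator E on A⊗B, define the generalized weak value W(E) := ⟨ψ, U† E U₂ Λ U₁ ψ⟩ / ⟨ψ, U† E U ψ⟩, where U = U₂ U₁ is any fixed factorization of the evolution. Then for any positive operator E_A on A, W(E_A ⊗ I) = W(E_A ⊗ |ψB⟩⟨ψB|), provided the denominators are nonzero. -/
import Mathlib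


open Kronecker Matrix
open scoped ComplexOrder

/-- Generalized weak value with evolution `U = U₂ * U₁`, probed observable `Λ`,
post-selection positive operator `E`, and preselected state `ψ`:
`W(E) = ⟨ψ, U† E U₂ Λ U₁ ψ⟩ / ⟨ψ, U† E U ψ⟩`. -/
noncomputable def weakValue {ι : Type*} [Fintype ι] [DecidableEq ι]
    (U U₂ U₁ Λ E : Matrix ι ι ℂ) (ψ : ι → ℂ) : ℂ :=
  (star ψ ⬝ᵥ (Uᴴ * E * U₂ * Λ * U₁).mulVec ψ) /
  (star ψ ⬝ᵥ (Uᴴ * E * U).mulVec ψ)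

/-- Lemma 1: if the evolved preselected state is a product state `ψA ⊗ ψB`, then
post-selecting the second subsystem onto `ψB` gives the same weak value as
ignoring it. -/
theorem weakValue_tensor_id_eq_tensor_proj {m n : ℕ}
    (U U₂ U₁ Λ : Matrix (Fin m × Fin n) (Fin m × Fin n) ℂ)
    (hU : U ∈ Matrix.unitaryGroup (Fin m × Fin n) ℂ)
    (hΛ : Λ.IsHermitian)
    (hfact : U = U₂ * U₁)
    (ψ : Fin m × Fin n → ℂ) (ψA : Fin m → ℂ) (ψB : Fin n → ℂ)
    (hψ : star ψ ⬝ᵥ ψ = 1) (hψA : star ψA ⬝ᵥ ψA = 1) (hψB : star ψB ⬝ᵥ ψB = 1)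
    (hprod : U.mulVec ψ = fun p => ψA p.1 * ψB p.2)
    (E_A : Matrix (Fin m) (Fin m) ℂ) (hE : E_A.PosSemidef)
    (hden1 : star ψ ⬝ᵥ (Uᴴ * (E_A ⊗ₖ (1 : Matrix (Fin n) (Fin n) ℂ)) * U).mulVec ψ ≠ 0)
    (hden2 : star ψ ⬝ᵥ (Uᴴ * (E_A ⊗ₖ Matrix.vecMulVec ψB (star ψB)) * U).mulVec ψ ≠ 0) :
    weakValue U U₂ U₁ Λ (E_A ⊗ₖ (1 : Matrix (Fin n) (Fin n) ℂ)) ψ =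
    weakValue U U₂ U₁ Λ (E_A ⊗ₖ Matrix.vecMulVec ψB (star ψB)) ψ := by
  have hstar : star ψ ᵥ* Uᴴ = fun p => star (ψA p.1) * star (ψB p.2) := by
    rw [← star_mulVec, hprod]
    funext p
    simp [star_mul']
  have hB : (∑ j, star (ψB j) * ψB j) = 1 := hψB
  have hkey : (star ψ ᵥ* Uᴴ) ᵥ* (E_A ⊗ₖ (1 : Matrix (Fin n) (Fin n) ℂ)) =
      (star ψ ᵥ* Uᴴ) ᵥ* (E_A ⊗ₖ Matrix.vecMulVec ψB (star ψB)) := by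
    funext q
    rw [hstar]
    simp only [vecMul, dotProduct, kroneckerMap_apply, Matrix.one_apply,
      vecMulVec_apply, Pi.star_apply]
    rw [Fintype.sum_prod_type, Fintype.sum_prod_type]
    have L : ∀ i : Fin m, (∑ j, star (ψA i) * star (ψB j) *
        (E_A i q.1 * if j = q.2 then (1:ℂ) else 0))
        = star (ψA i) * E_A i q.1 * star (ψB q.2) := by
      intro i
      simp [mul_ite, Finset.sum_ite_eq']
      ring
    have R : ∀ i : Fin m, (∑ j, star (ψA i) * star (ψB j) *
        (E_A i q.1 * (ψB j * star (ψB q.2))))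
        = star (ψA i) * E_A i q.1 * star (ψB q.2) := by
      intro i
      have : (∑ j, star (ψA i) * star (ψB j) * (E_A i q.1 * (ψB j * star (ψB q.2))))
          = (star (ψA i) * E_A i q.1 * star (ψB q.2)) * ∑ j, star (ψB j) * ψB j := by
        rw [Finset.mul_sum]
        exact Finset.sum_congr rfl fun j _ => by ring
      rw [this, hB, mul_one]
    simp only [L, R]
  have main : ∀ (M : Matrix (Fin m × Fin n) (Fin m × Fin n) ℂ),
      star ψ ⬝ᵥ (Uᴴ * (E_A ⊗ₖ (1 : Matrix (Fin n) (Fin n) ℂ)) * M).mulVec ψ =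
      star ψ ⬝ᵥ (Uᴴ * (E_A ⊗ₖ Matrix.vecMulVec ψB (star ψB)) * M).mulVec ψ := by
    intro M
    rw [dotProduct_mulVec, dotProduct_mulVec, ← vecMul_vecMul, ← vecMul_vecMul,
      ← vecMul_vecMul, ← vecMul_vecMul, hkey]
  unfold weakValue
  rw [show Uᴴ * (E_A ⊗ₖ (1 : Matrix (Fin n) (Fin n) ℂ)) * U₂ * Λ * U₁ =
      Uᴴ * (E_A ⊗ₖ (1 : Matrix (Fin n) (Fin n) ℂ)) * (U₂ * Λ * U₁) by
    simp [Matrix.mul_assoc],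
    show Uᴴ * (E_A ⊗ₖ Matrix.vecMulVec ψB (star ψB)) * U₂ * Λ * U₁ =
      Uᴴ * (E_A ⊗ₖ Matrix.vecMulVec ψB (star ψB)) * (U₂ * Λ * U₁) by
    simp [Matrix.mul_assoc],
    main, main]
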